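/- Let σ₀ ∈ ℝ^d (d ≥ 1) and 0 < r < ρ. Let F : [0,∞) → ℝ be continuous with F(0) = 0, let t₀ > 0 with F(t₀) > 0, and let α : ℝ^d → [0,∞) be measurable and essentially bounded with α ≥ α₀ almost everywhere on A_r^ρ(σ₀) for some α₀ > 0. Then there exists ε₀ ∈ [1/2, 1) such that α₀ F(t₀) · vol(A_{ε₀ r}^ρ(σ₀)) > ‖α‖_∞ · ( sup_{t ∈ (0,t₀]} |F(t)| ) · vol( A_r^ρ(σ₀) ∖ A_{ε₀ r}^ρ(σ₀) ); consequently, for the test function w_{ρ,r}^{ε₀}(x) = min{1, max{0, (r − | ‖x − σ₀‖ − ρ |)/((1−ε₀)r)}}, one has ∫_{ℝ^d} α(x) F(t₀ w_{ρ,r}^{ε₀}(x)) dx > 0. -/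

import Mathlib

open MeasureTheory Set Filter Topology
open scoped ENNReal

/-!
Write `A_a = A_a^ρ(σ₀)`. The open annuli `A_{εr}` exhaust `A_r` as `ε → 1⁻`, so by continuity
of the (finite) measure `vol(A_r ∖ A_{εr}) → 0`, while `vol(A_{εr}) ≥ vol(A_{r/2}) > 0` for
`ε ≥ 1/2`; this gives `ε₀`. The test function `w` equals `1` on `A_{ε₀r}` and vanishes off `A_r`,
so the integral of `α F(t₀ w)` is at least `α₀ F(t₀) vol(A_{ε₀r})` minus
`‖α‖_∞ sup_{(0,t₀]}|F| · vol(A_r ∖ A_{ε₀r})`, which is positive by the choice of `ε₀`.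
-/

section Annulus

variable {E : Type*} [NormedAddCommGroup E]

/-- `annulus c a b` is the paper's `A_a^b(c)`. -/
def annulus (c : E) (a b : ℝ) : Set E := {y | b - a < ‖y - c‖ ∧ ‖y - c‖ < a + b}

theorem mem_annulus {c y : E} {a b : ℝ} : y ∈ annulus c a b ↔ |‖y - c‖ - b| < a := by
  show _ ∧ _ ↔ _
  rw [abs_lt]
  constructor <;> rintro ⟨h₁, h₂⟩ <;> constructor <;> linarith

theorem isOpen_annulus (c : E) (a b : ℝ) : IsOpen (annulus c a b) :=
  isOpen_Ioo.preimage (continuous_id.sub continuous_const).norm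

theorem annulus_mono (c : E) {a a' : ℝ} (b : ℝ) (h : a ≤ a') : annulus c a b ⊆ annulus c a' b :=
  fun _ hy => mem_annulus.2 ((mem_annulus.1 hy).trans_le h)

theorem annulus_subset_ball (c : E) (a b : ℝ) : annulus c a b ⊆ Metric.ball c (a + b) :=
  fun _ hy => by simpa [dist_eq_norm] using hy.2

theorem annulus_nonempty [NormedSpace ℝ E] [Nontrivial E] (c : E) {a b : ℝ} (ha : 0 < a)
    (hb : 0 ≤ b) : (annulus c a b).Nonempty := by
  obtain ⟨u, hu⟩ := exists_norm_eq E hb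
  exact ⟨c + u, mem_annulus.2 (by simpa [hu] using ha)⟩

theorem biInter_annulus_sdiff (c : E) {a : ℝ} (b : ℝ) (ha : 0 < a) :
    ⋂ δ > (0 : ℝ), annulus c a b \ annulus c ((1 - δ) * a) b = ∅ := by
  refine eq_empty_of_forall_notMem fun y hy => ?_
  simp only [mem_iInter, Set.mem_sdiff, mem_annulus] at hy
  have hya : |‖y - c‖ - b| / a < 1 := (div_lt_one ha).2 (hy 1 one_pos).1
  obtain ⟨δ, hδ, hδy⟩ := exists_between (sub_pos.2 hya)
  rw [lt_sub_comm, div_lt_iff₀ ha] at hδy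
  exact (hy δ hδ).2 hδy

end Annulus

section Measure

variable {E : Type*} [NormedAddCommGroup E] [MeasurableSpace E] (μ : Measure E) (c : E)

theorem measurableSet_annulus [BorelSpace E] (a b : ℝ) : MeasurableSet (annulus c a b) :=
  (isOpen_annulus c a b).measurableSet

theorem measure_annulus_lt_top [ProperSpace E] [IsFiniteMeasureOnCompacts μ] (a b : ℝ) :
    μ (annulus c a b) < ∞ :=
  (measure_mono (annulus_subset_ball c a b)).trans_lt measure_ball_lt_top

theorem measure_annulus_pos [NormedSpace ℝ E] [Nontrivial E] [μ.IsOpenPosMeasure] {a b : ℝ}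
    (ha : 0 < a) (hb : 0 ≤ b) : 0 < μ (annulus c a b) :=
  (isOpen_annulus c a b).measure_pos μ (annulus_nonempty c ha hb)

theorem tendsto_measure_annulus_sdiff [BorelSpace E] {a : ℝ} (b : ℝ) (ha : 0 < a)
    (hfin : μ (annulus c a b) ≠ ∞) :
    Tendsto (fun ε => μ (annulus c a b \ annulus c (ε * a) b)) (𝓝[<] 1) (𝓝 0) := by
  have hδ : Tendsto (fun δ => μ (annulus c a b \ annulus c ((1 - δ) * a) b)) (𝓝[>] 0) (𝓝 0) := by
    have h := tendsto_measure_biInter_gt (μ := μ) (a := (0 : ℝ))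
      (s := fun δ => annulus c a b \ annulus c ((1 - δ) * a) b)
      (fun _ _ =>
        ((measurableSet_annulus c _ _).diff (measurableSet_annulus c _ _)).nullMeasurableSet)
      (fun _ _ _ hδδ' => sdiff_subset_sdiff_right (annulus_mono c b (by gcongr)))
      ⟨1, one_pos, ne_top_of_le_ne_top hfin (measure_mono sdiff_subset)⟩
    rwa [biInter_annulus_sdiff c b ha, measure_empty] at h
  have hsub : Tendsto (fun ε : ℝ => 1 - ε) (𝓝[<] 1) (𝓝[>] 0) :=
    tendsto_nhdsWithin_iff.2
      ⟨((continuous_const.sub continuous_id).tendsto' 1 0 (sub_self 1)).mono_left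
        nhdsWithin_le_nhds, eventually_nhdsWithin_of_forall fun _ h => sub_pos.2 (mem_Iio.1 h)⟩
  simpa only [Function.comp_def, sub_sub_cancel] using hδ.comp hsub

theorem exists_mul_measureReal_annulus_sdiff_lt [BorelSpace E] [NormedSpace ℝ E] [Nontrivial E]
    [ProperSpace E] [IsFiniteMeasureOnCompacts μ] [μ.IsOpenPosMeasure] {a b m : ℝ} (K : ℝ)
    (hm : 0 < m) (ha : 0 < a) (hb : 0 ≤ b) :
    ∃ ε ∈ Ico (1 / 2 : ℝ) 1, K * μ.real (annulus c a b \ annulus c (ε * a) b) <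
      m * μ.real (annulus c (ε * a) b) := by
  have hpos : 0 < m * μ.real (annulus c (1 / 2 * a) b) :=
    mul_pos hm (ENNReal.toReal_pos (measure_annulus_pos μ c (by positivity) hb).ne'
      (measure_annulus_lt_top μ c _ _).ne)
  have hlim : Tendsto (fun ε => K * μ.real (annulus c a b \ annulus c (ε * a) b)) (𝓝[<] 1)
      (𝓝 0) := by
    simpa [measureReal_def] using ((ENNReal.tendsto_toReal ENNReal.zero_ne_top).comp
      (tendsto_measure_annulus_sdiff μ c b ha (measure_annulus_lt_top μ c a b).ne)).const_mul K
  obtain ⟨ε, hε, hKε⟩ := (Filter.Eventually.and (Ico_mem_nhdsLT (by norm_num : (1 / 2 : ℝ) < 1))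
    (hlim.eventually (gt_mem_nhds hpos))).exists
  refine ⟨ε, hε, hKε.trans_le ?_⟩
  exact mul_le_mul_of_nonneg_left (measureReal_mono
    (annulus_mono c b (mul_le_mul_of_nonneg_right hε.1 ha.le)) (measure_annulus_lt_top μ c _ _).ne)
    hm.le

end Measure

section Cutoff

variable {E : Type*} [NormedAddCommGroup E]

/-- The paper's test function `w_{b,a}^ε`. -/
noncomputable def annulusCutoff (c : E) (a b ε : ℝ) (x : E) : ℝ :=
  min 1 (max 0 ((a - |‖x - c‖ - b|) / ((1 - ε) * a)))

theorem annulusCutoff_mem_Icc (c : E) (a b ε : ℝ) (x : E) : annulusCutoff c a b ε x ∈ Icc 0 1 :=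
  ⟨le_min zero_le_one (le_max_left _ _), min_le_left _ _⟩

theorem continuous_annulusCutoff (c : E) (a b ε : ℝ) : Continuous (annulusCutoff c a b ε) := by
  unfold annulusCutoff
  fun_prop

theorem annulusCutoff_eq_zero {c x : E} {a b ε : ℝ} (ha : 0 ≤ a) (hε : ε ≤ 1)
    (hx : x ∉ annulus c a b) : annulusCutoff c a b ε x = 0 := by
  rw [mem_annulus, not_lt] at hx
  have hneg : (a - |‖x - c‖ - b|) / ((1 - ε) * a) ≤ 0 :=
    div_nonpos_of_nonpos_of_nonneg (by linarith) (mul_nonneg (by linarith) ha)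
  rw [annulusCutoff, max_eq_left hneg, min_eq_right zero_le_one]

theorem annulusCutoff_eq_one {c x : E} {a b ε : ℝ} (ha : 0 < a) (hε : ε < 1)
    (hx : x ∈ annulus c (ε * a) b) : annulusCutoff c a b ε x = 1 := by
  rw [mem_annulus] at hx
  have hden : 0 < (1 - ε) * a := mul_pos (sub_pos.2 hε) ha
  have hge : 1 ≤ (a - |‖x - c‖ - b|) / ((1 - ε) * a) := (one_le_div hden).2 (by linarith)
  rw [annulusCutoff, min_eq_left (hge.trans (le_max_right _ _))]

end Cutoff

theorem abs_le_sSup_abs_image_Ioc {F : ℝ → ℝ} {T t : ℝ} (hF : ContinuousOn F (Icc 0 T))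
    (hF0 : F 0 = 0) (hT : 0 < T) (ht : t ∈ Icc 0 T) :
    |F t| ≤ sSup ((fun s => |F s|) '' Ioc 0 T) := by
  have hbdd : BddAbove ((fun s => |F s|) '' Ioc 0 T) :=
    (isCompact_Icc.image_of_continuousOn hF.abs).bddAbove.mono (image_mono Ioc_subset_Icc_self)
  rcases ht.1.eq_or_lt with rfl | ht₀
  · rw [hF0, abs_zero]
    exact (abs_nonneg _).trans (le_csSup hbdd ⟨T, ⟨hT, le_rfl⟩, rfl⟩)
  · exact le_csSup hbdd ⟨t, ⟨ht₀, ht.2⟩, rfl⟩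

theorem sub_le_integral_of_bounds {X : Type*} [MeasurableSpace X] {μ : Measure X} {g : X → ℝ}
    {S T : Set X} {m K : ℝ} (hT : MeasurableSet T) (hTS : T ⊆ S) (hS : μ S ≠ ∞)
    (hg : AEStronglyMeasurable g μ) (hg0 : ∀ x ∉ S, g x = 0) (hgK : ∀ᵐ x ∂μ, |g x| ≤ K)
    (hgm : ∀ᵐ x ∂μ.restrict T, m ≤ g x) :
    m * μ.real T - K * μ.real (S \ T) ≤ ∫ x, g x ∂μ := by
  have hgS : IntegrableOn g S μ := Measure.integrableOn_of_bounded hS hg (ae_restrict_of_ae hgK)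
  have hT_lb : m * μ.real T ≤ ∫ x in T, g x ∂μ := by
    rw [mul_comm, ← smul_eq_mul, ← setIntegral_const]
    exact integral_mono_ae (integrableOn_const (ne_top_of_le_ne_top hS (measure_mono hTS)))
      (hgS.mono_set hTS) hgm
  have hST_ub : ‖∫ x in S \ T, g x ∂μ‖ ≤ K * μ.real (S \ T) :=
    norm_setIntegral_le_of_norm_le_const_ae ((measure_mono sdiff_subset).trans_lt hS.lt_top)
      (ae_restrict_of_ae hgK)
  rw [← setIntegral_eq_integral_of_forall_compl_eq_zero hg0, ← integral_inter_add_sdiff hT hgS,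
    inter_eq_right.2 hTS]
  linarith [neg_abs_le (∫ x in S \ T, g x ∂μ), Real.norm_eq_abs (∫ x in S \ T, g x ∂μ)]

theorem sub_le_integral_mul_comp_annulusCutoff {E : Type*} [NormedAddCommGroup E]
    [MeasurableSpace E] [BorelSpace E] [ProperSpace E] (μ : Measure E)
    [IsFiniteMeasureOnCompacts μ] (c : E) {a b ε t₀ m N M : ℝ} {α : E → ℝ} {F : ℝ → ℝ}
    (ha : 0 < a) (hε : ε < 1) (hF : ContinuousOn F (Ici 0)) (hF0 : F 0 = 0)
    (hFM : ∀ t ∈ Icc 0 t₀, |F t| ≤ M) (ht₀ : 0 ≤ t₀) (hFt₀ : 0 ≤ F t₀)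
    (hα : AEStronglyMeasurable α μ) (hαN : ∀ᵐ x ∂μ, |α x| ≤ N)
    (hαm : ∀ᵐ x ∂μ.restrict (annulus c a b), m ≤ α x) :
    m * F t₀ * μ.real (annulus c (ε * a) b) -
        N * M * μ.real (annulus c a b \ annulus c (ε * a) b) ≤
      ∫ x, α x * F (t₀ * annulusCutoff c a b ε x) ∂μ := by
  have hw : ∀ x, t₀ * annulusCutoff c a b ε x ∈ Icc 0 t₀ := fun x =>
    ⟨mul_nonneg ht₀ (annulusCutoff_mem_Icc c a b ε x).1,
      mul_le_of_le_one_right ht₀ (annulusCutoff_mem_Icc c a b ε x).2⟩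
  have hsub : annulus c (ε * a) b ⊆ annulus c a b :=
    annulus_mono c b (mul_le_of_le_one_left ha.le hε.le)
  refine sub_le_integral_of_bounds (measurableSet_annulus c _ b) hsub
    (measure_annulus_lt_top μ c a b).ne ?_ ?_ ?_ ?_
  · exact hα.mul (hF.comp_continuous (continuous_const.mul (continuous_annulusCutoff c a b ε))
      fun x => (hw x).1).aestronglyMeasurable
  · intro x hx
    rw [annulusCutoff_eq_zero ha.le hε.le hx, mul_zero, hF0, mul_zero]
  · filter_upwards [hαN] with x hx
    rw [abs_mul]
    exact mul_le_mul hx (hFM _ (hw x)) (abs_nonneg _) ((abs_nonneg _).trans hx)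
  · filter_upwards [ae_restrict_of_ae_restrict_of_subset hsub hαm,
      ae_restrict_mem (measurableSet_annulus c _ b)] with x hx hxA
    rw [annulusCutoff_eq_one ha hε hxA, mul_one]
    exact mul_le_mul_of_nonneg_right hx hFt₀

theorem stmt_12_general (d : ℕ) (hd : 1 ≤ d) (σ₀ : EuclideanSpace ℝ (Fin d)) (r ρ : ℝ)
    (hr : 0 < r) (hrρ : r < ρ)
    (F : ℝ → ℝ) (hF_cont : ContinuousOn F (Set.Ici 0)) (hF0 : F 0 = 0)
    (t₀ : ℝ) (ht₀ : 0 < t₀) (hFt₀ : 0 < F t₀)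
    (α : EuclideanSpace ℝ (Fin d) → ℝ)
    (hα_top : MemLp α ⊤ volume)
    (α₀ : ℝ) (hα₀ : 0 < α₀)
    (hα_lb : ∀ᵐ x ∂(volume.restrict
      {y : EuclideanSpace ℝ (Fin d) | ρ - r < ‖y - σ₀‖ ∧ ‖y - σ₀‖ < r + ρ}),
      α₀ ≤ α x) :
    ∃ ε₀ ∈ Set.Ico (1 / 2 : ℝ) 1,
      (eLpNorm α ⊤ volume).toReal * sSup ((fun t => |F t|) '' Set.Ioc 0 t₀) *
          (volume ({y : EuclideanSpace ℝ (Fin d) | ρ - r < ‖y - σ₀‖ ∧ ‖y - σ₀‖ < r + ρ} \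
            {y : EuclideanSpace ℝ (Fin d) |
              ρ - ε₀ * r < ‖y - σ₀‖ ∧ ‖y - σ₀‖ < ε₀ * r + ρ})).toReal <
        α₀ * F t₀ * (volume {y : EuclideanSpace ℝ (Fin d) |
          ρ - ε₀ * r < ‖y - σ₀‖ ∧ ‖y - σ₀‖ < ε₀ * r + ρ}).toReal ∧
      0 < ∫ x, α x * F (t₀ * min 1 (max 0 ((r - |‖x - σ₀‖ - ρ|) / ((1 - ε₀) * r)))) := by
  have : Nonempty (Fin d) := ⟨⟨0, hd⟩⟩
  have hFM : ∀ t ∈ Icc 0 t₀, |F t| ≤ sSup ((fun t => |F t|) '' Ioc 0 t₀) := fun _ =>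
    abs_le_sSup_abs_image_Ioc (hF_cont.mono Icc_subset_Ici_self) hF0 ht₀
  have hαN : ∀ᵐ x, |α x| ≤ (eLpNorm α ⊤ volume).toReal := by
    rw [toReal_eLpNorm hα_top.1]
    exact ae_le_lpNorm_exponent_top hα_top
  obtain ⟨ε₀, hε₀, hlt⟩ := exists_mul_measureReal_annulus_sdiff_lt volume σ₀
    ((eLpNorm α ⊤ volume).toReal * sSup ((fun t => |F t|) '' Ioc 0 t₀)) (mul_pos hα₀ hFt₀) hr
    (hr.trans hrρ).le
  exact ⟨ε₀, hε₀, hlt, (sub_pos.2 hlt).trans_le <|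
    sub_le_integral_mul_comp_annulusCutoff volume σ₀ hr hε₀.2 hF_cont hF0 hFM ht₀.le hFt₀.le
      hα_top.1 hαN hα_lb⟩

/-- Let `σ₀ ∈ ℝ^d` (`d ≥ 1`), `0 < r < ρ`, `F : [0,∞) → ℝ`
continuous with `F(0) = 0`, `t₀ > 0` with `F(t₀) > 0`, and `α ≥ 0` measurable,
essentially bounded, with `α ≥ α₀ > 0` a.e. on the annulus `A_r^ρ(σ₀)`. Then there
exists `ε₀ ∈ [1/2,1)` with
`α₀ F(t₀) vol(A_{ε₀r}^ρ) > ‖α‖_∞ (sup_{(0,t₀]}|F|) vol(A_r^ρ ∖ A_{ε₀r}^ρ)`, and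
consequently `∫ α F(t₀ w_{ρ,r}^{ε₀}) > 0` for the clamped test function. -/
theorem stmt_12 (d : ℕ) (hd : 1 ≤ d) (σ₀ : EuclideanSpace ℝ (Fin d)) (r ρ : ℝ)
    (hr : 0 < r) (hrρ : r < ρ)
    (F : ℝ → ℝ) (hF_cont : ContinuousOn F (Set.Ici 0)) (hF0 : F 0 = 0)
    (t₀ : ℝ) (ht₀ : 0 < t₀) (hFt₀ : 0 < F t₀)
    (α : EuclideanSpace ℝ (Fin d) → ℝ) (hα_meas : Measurable α)
    (hα_nonneg : ∀ x, 0 ≤ α x) (hα_top : MemLp α ⊤ volume)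
    (α₀ : ℝ) (hα₀ : 0 < α₀)
    (hα_lb : ∀ᵐ x ∂(volume.restrict
      {y : EuclideanSpace ℝ (Fin d) | ρ - r < ‖y - σ₀‖ ∧ ‖y - σ₀‖ < r + ρ}),
      α₀ ≤ α x) :
    ∃ ε₀ ∈ Set.Ico (1 / 2 : ℝ) 1,
      (eLpNorm α ⊤ volume).toReal * sSup ((fun t => |F t|) '' Set.Ioc 0 t₀) *
          (volume ({y : EuclideanSpace ℝ (Fin d) | ρ - r < ‖y - σ₀‖ ∧ ‖y - σ₀‖ < r + ρ} \
            {y : EuclideanSpace ℝ (Fin d) |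
              ρ - ε₀ * r < ‖y - σ₀‖ ∧ ‖y - σ₀‖ < ε₀ * r + ρ})).toReal <
        α₀ * F t₀ * (volume {y : EuclideanSpace ℝ (Fin d) |
          ρ - ε₀ * r < ‖y - σ₀‖ ∧ ‖y - σ₀‖ < ε₀ * r + ρ}).toReal ∧
      0 < ∫ x, α x * F (t₀ * min 1 (max 0 ((r - |‖x - σ₀‖ - ρ|) / ((1 - ε₀) * r)))) :=
  stmt_12_general d hd σ₀ r ρ hr hrρ F hF_cont hF0 t₀ ht₀ hFt₀ α hα_top α₀ hα₀ hα_lb
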